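/- Let a : [0,1] → ℝ be weakly or strongly degenerate at 0, and let y be four times (weakly) differentiable on (0,1] with ∫₀¹ a(s) y''''(s)² ds < ∞ and y''' locally absolutely continuous on (0,1]. Then s ↦ s·y''''(s) belongs to L¹(0,1) and the limit lim_{δ→0⁺} δ y'''(δ) exists and is finite. -/

import Mathlib

open MeasureTheory Set Filter Topology
open scoped ENNReal NNReal

noncomputable section

/-- The set of quotients `x |a'(x)| / a(x)` for `x ∈ (0,1]`, whose supremum is the
degeneracy constant `K`. -/
def DegenSet (a a' : ℝ → ℝ) : Set ℝ :=
  {r : ℝ | ∃ x ∈ Set.Ioc (0:ℝ) 1, r = x * |a' x| / a x}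

/-- `a` is weakly degenerate at `0` with constant `K`: `a ∈ C[0,1] ∩ C¹(0,1]`, `a(0) = 0`,
`a > 0` on `(0,1]`, and `K = sup_{x ∈ (0,1]} x|a'(x)|/a(x) ∈ (0,1)`. -/
def WeaklyDegenerate (a a' : ℝ → ℝ) (K : ℝ) : Prop :=
  ContinuousOn a (Set.Icc 0 1) ∧
  (∀ x ∈ Set.Ioc (0:ℝ) 1, HasDerivWithinAt a (a' x) (Set.Icc 0 1) x) ∧
  ContinuousOn a' (Set.Ioc 0 1) ∧
  a 0 = 0 ∧ (∀ x ∈ Set.Ioc (0:ℝ) 1, 0 < a x) ∧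
  K = sSup (DegenSet a a') ∧ 0 < K ∧ K < 1

/-- `a` is strongly degenerate at `0` with constant `K`: `a ∈ C¹[0,1]`, `a(0) = 0`,
`a > 0` on `(0,1]`, and `K = sup_{x ∈ (0,1]} x|a'(x)|/a(x) ∈ [1,2)`. -/
def StronglyDegenerate (a a' : ℝ → ℝ) (K : ℝ) : Prop :=
  (∀ x ∈ Set.Icc (0:ℝ) 1, HasDerivWithinAt a (a' x) (Set.Icc 0 1) x) ∧
  ContinuousOn a' (Set.Icc 0 1) ∧
  a 0 = 0 ∧ (∀ x ∈ Set.Ioc (0:ℝ) 1, 0 < a x) ∧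
  K = sSup (DegenSet a a') ∧ 1 ≤ K ∧ K < 2

/-- `a` is weakly or strongly degenerate at `0` with constant `K`. -/
def Degenerate (a a' : ℝ → ℝ) (K : ℝ) : Prop :=
  WeaklyDegenerate a a' K ∨ StronglyDegenerate a a' K

lemma degen_bound (a a' : ℝ → ℝ) (K : ℝ)
    (hpos : ∀ x ∈ Set.Ioc (0:ℝ) 1, 0 < a x)
    (hcont : ContinuousOn a (Set.Ioc 0 1))
    (hderiv : ∀ x ∈ Set.Ioo (0:ℝ) 1, HasDerivAt a (a' x) x)
    (hKsup : K = sSup (DegenSet a a')) (hK0 : 0 < K) (hK2 : K < 2) :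
    ∀ s ∈ Set.Ioc (0:ℝ) 1, s * Real.sqrt (a 1) ≤ Real.sqrt (a s) := by
  have ha1 : 0 < a 1 := hpos 1 ⟨one_pos, le_refl 1⟩
  have hbdd : BddAbove (DegenSet a a') := by
    by_contra hb
    rw [Real.sSup_of_not_bddAbove hb] at hKsup
    linarith
  have hK : ∀ x ∈ Set.Ioc (0:ℝ) 1, x * |a' x| ≤ K * a x := by
    intro x hx
    have h1 : x * |a' x| / a x ≤ K := by
      rw [hKsup]; exact le_csSup hbdd ⟨x, hx, rfl⟩
    exact (div_le_iff₀ (hpos x hx)).mp h1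
  set g : ℝ → ℝ := fun x => a x / x ^ K with hg
  have hgd : ∀ x ∈ Set.Ioo (0:ℝ) 1,
      HasDerivAt g ((a' x * x ^ K - a x * (K * x ^ (K - 1))) / (x ^ K) ^ 2) x := by
    intro x hx
    exact (hderiv x hx).div (Real.hasDerivAt_rpow_const (Or.inl hx.1.ne'))
      (Real.rpow_pos_of_pos hx.1 K).ne'
  have hnum : ∀ x ∈ Set.Ioo (0:ℝ) 1, a' x * x ^ K - a x * (K * x ^ (K - 1)) ≤ 0 := by
    intro x hx
    have hxpos := hx.1
    have hsplit : x ^ K = x * x ^ (K - 1) := by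
      rw [show K = 1 + (K - 1) by ring, Real.rpow_add hxpos, Real.rpow_one]
      ring_nf
    have h1 : a' x * x ≤ K * a x := by
      calc a' x * x ≤ |a' x| * x := by
            exact mul_le_mul_of_nonneg_right (le_abs_self _) hxpos.le
        _ = x * |a' x| := by ring
        _ ≤ K * a x := hK x ⟨hxpos, hx.2.le⟩
    have hpw : (0:ℝ) < x ^ (K - 1) := Real.rpow_pos_of_pos hxpos _
    rw [hsplit]
    nlinarith [mul_le_mul_of_nonneg_right h1 hpw.le]
  have hanti : AntitoneOn g (Set.Ioc 0 1) := by
    apply antitoneOn_of_deriv_nonpos (convex_Ioc 0 1)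
    · apply hcont.div
      · intro x hx
        exact (Real.continuousAt_rpow_const x K (Or.inl hx.1.ne')).continuousWithinAt
      · intro x hx
        exact (Real.rpow_pos_of_pos hx.1 K).ne'
    · rw [interior_Ioc]
      intro x hx
      exact (hgd x hx).differentiableAt.differentiableWithinAt
    · rw [interior_Ioc]
      intro x hx
      rw [(hgd x hx).deriv]
      apply div_nonpos_of_nonpos_of_nonneg (hnum x hx)
      positivity
  intro s hs
  have hga : a 1 ≤ g s := by
    have := hanti hs (Set.right_mem_Ioc.mpr one_pos) hs.2
    simpa [hg, Real.one_rpow] using this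
  have hsK : a 1 * s ^ K ≤ a s := by
    rw [hg] at hga
    have := (le_div_iff₀ (Real.rpow_pos_of_pos hs.1 K)).mp hga
    linarith
  have hs2 : s ^ (2:ℝ) ≤ s ^ K :=
    Real.rpow_le_rpow_of_exponent_ge hs.1 hs.2 hK2.le
  have hfin : a 1 * s ^ 2 ≤ a s := by
    have h2 : s ^ (2:ℝ) = s ^ (2:ℕ) := by
      rw [show (2:ℝ) = ((2:ℕ):ℝ) by norm_num, Real.rpow_natCast]
    have h5 : a 1 * s ^ (2:ℕ) ≤ a 1 * s ^ K :=
      mul_le_mul_of_nonneg_left (h2 ▸ hs2) ha1.le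
    calc a 1 * s ^ 2 ≤ a 1 * s ^ K := h5
      _ ≤ a s := hsK
  have h3 : (s * Real.sqrt (a 1)) ^ 2 ≤ a s := by
    rw [mul_pow, Real.sq_sqrt ha1.le]; linarith
  have h4 : 0 ≤ s * Real.sqrt (a 1) := mul_nonneg hs.1.le (Real.sqrt_nonneg _)
  calc s * Real.sqrt (a 1) = Real.sqrt ((s * Real.sqrt (a 1))^2) := (Real.sqrt_sq h4).symm
    _ ≤ Real.sqrt (a s) := Real.sqrt_le_sqrt h3

lemma aesm_y4 (y''' y'''' : ℝ → ℝ)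
    (hy4 : ∀ x ∈ Set.Ioc (0:ℝ) 1, HasDerivWithinAt y''' (y'''' x) (Set.Ioc 0 1) x) :
    AEStronglyMeasurable y'''' (volume.restrict (Set.Ioc 0 1)) := by
  have h1 : ∀ x ∈ Set.Ioo (0:ℝ) 1, deriv y''' x = y'''' x := fun x hx =>
    ((hy4 x ⟨hx.1, hx.2.le⟩).hasDerivAt (Ioc_mem_nhds hx.1 hx.2)).deriv
  have h3 : ∀ᵐ x : ℝ, x ≠ (1:ℝ) := by
    rw [ae_iff]
    simp only [ne_eq, not_not, setOf_eq_eq_singleton]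
    exact measure_singleton 1
  refine ((measurable_deriv y''').aestronglyMeasurable (μ := volume.restrict (Set.Ioc 0 1))).congr ?_
  filter_upwards [ae_restrict_mem measurableSet_Ioc, ae_restrict_of_ae h3] with x hx hx1
  exact h1 x ⟨hx.1, lt_of_le_of_ne hx.2 hx1⟩

lemma integrable_s_y4 (a : ℝ → ℝ) (y''' y'''' : ℝ → ℝ) (c : ℝ) (hc : 0 < c)
    (hb : ∀ s ∈ Set.Ioc (0:ℝ) 1, s * c⁻¹ ≤ Real.sqrt (a s))
    (ha0 : ∀ s ∈ Set.Ioc (0:ℝ) 1, 0 ≤ a s)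
    (hy4 : ∀ x ∈ Set.Ioc (0:ℝ) 1, HasDerivWithinAt y''' (y'''' x) (Set.Ioc 0 1) x)
    (hDA : MeasureTheory.IntegrableOn (fun s => a s * y'''' s ^ 2) (Set.Ioc 0 1)) :
    MeasureTheory.IntegrableOn (fun s => s * y'''' s) (Set.Ioc 0 1) := by
  have hconst : MeasureTheory.IntegrableOn (fun _ : ℝ => (1:ℝ)) (Set.Ioc 0 1) volume := by
    apply (integrableOn_const_iff (C := (1:ℝ))).mpr
    right
    rw [Real.volume_Ioc]
    norm_num
  have hg : MeasureTheory.IntegrableOn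
      (fun s => c / 2 * (1 + a s * y'''' s ^ 2)) (Set.Ioc 0 1) volume :=
    (hconst.add hDA).const_mul (c / 2)
  refine hg.mono' ((measurable_id.aestronglyMeasurable).mul (aesm_y4 y''' y'''' hy4)) ?_
  filter_upwards [ae_restrict_mem measurableSet_Ioc] with s hs
  have has := ha0 s hs
  have h1 : s ≤ c * Real.sqrt (a s) := by
    calc s = s * c⁻¹ * c := by field_simp
      _ ≤ Real.sqrt (a s) * c := mul_le_mul_of_nonneg_right (hb s hs) hc.le
      _ = c * Real.sqrt (a s) := by ring
  have h2 : Real.sqrt (a s) * |y'''' s| = Real.sqrt (a s * y'''' s ^ 2) := by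
    rw [Real.sqrt_mul has, Real.sqrt_sq_eq_abs]
  have h3 : Real.sqrt (a s * y'''' s ^ 2) ≤ (1 + a s * y'''' s ^ 2) / 2 := by
    have ht : 0 ≤ a s * y'''' s ^ 2 := by positivity
    nlinarith [Real.sq_sqrt ht, Real.sqrt_nonneg (a s * y'''' s ^ 2), sq_nonneg (1 - Real.sqrt (a s * y'''' s ^ 2))]
  have habs : ‖s * y'''' s‖ = s * |y'''' s| := by
    rw [Real.norm_eq_abs, abs_mul, abs_of_pos hs.1]
  rw [habs]
  calc s * |y'''' s| ≤ c * Real.sqrt (a s) * |y'''' s| :=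
        mul_le_mul_of_nonneg_right h1 (abs_nonneg _)
    _ = c * (Real.sqrt (a s) * |y'''' s|) := by ring
    _ = c * Real.sqrt (a s * y'''' s ^ 2) := by rw [h2]
    _ ≤ c * ((1 + a s * y'''' s ^ 2) / 2) := by
        exact mul_le_mul_of_nonneg_left h3 hc.le
    _ = c / 2 * (1 + a s * y'''' s ^ 2) := by ring

-- integrability of y'''' on Ioc δ 1
lemma integrable_y4_tail (y'''' : ℝ → ℝ) {δ : ℝ} (hδ : δ ∈ Set.Ioc (0:ℝ) 1)
    (haesm : AEStronglyMeasurable y'''' (volume.restrict (Set.Ioc 0 1)))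
    (hsy4 : MeasureTheory.IntegrableOn (fun s => s * y'''' s) (Set.Ioc 0 1)) :
    MeasureTheory.IntegrableOn y'''' (Set.Ioc δ 1) := by
  have hsub : Set.Ioc δ 1 ⊆ Set.Ioc (0:ℝ) 1 := Set.Ioc_subset_Ioc_left hδ.1.le
  have hg0 : MeasureTheory.IntegrableOn (fun s => δ⁻¹ * |s * y'''' s|) (Set.Ioc 0 1) :=
    (hsy4.abs).const_mul δ⁻¹
  have hg : MeasureTheory.IntegrableOn (fun s => δ⁻¹ * |s * y'''' s|) (Set.Ioc δ 1) :=
    hg0.mono_set hsub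
  refine hg.mono' (haesm.mono_measure (Measure.restrict_mono hsub le_rfl)) ?_
  filter_upwards [ae_restrict_mem measurableSet_Ioc] with s hs
  have hs0 : (0:ℝ) < s := lt_trans hδ.1 hs.1
  rw [Real.norm_eq_abs, abs_mul, abs_of_pos hs0]
  rw [inv_mul_eq_div, le_div_iff₀ hδ.1]
  calc |y'''' s| * δ = δ * |y'''' s| := mul_comm _ _
    _ ≤ s * |y'''' s| := mul_le_mul_of_nonneg_right hs.1.le (abs_nonneg _)

lemma ftc_Ioc (f f' : ℝ → ℝ)
    (hcont : ContinuousOn f (Set.Ioc 0 1))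
    (hd : ∀ x ∈ Set.Ioo (0:ℝ) 1, HasDerivAt f (f' x) x)
    {δ : ℝ} (hδ : δ ∈ Set.Ioc (0:ℝ) 1)
    (hint : MeasureTheory.IntegrableOn f' (Set.Ioc δ 1)) :
    ∫ s in δ..1, f' s = f 1 - f δ := by
  apply intervalIntegral.integral_eq_sub_of_hasDeriv_right_of_le hδ.2
  · exact hcont.mono (fun x hx => ⟨lt_of_lt_of_le hδ.1 hx.1, hx.2⟩)
  · intro x hx
    exact (hd x ⟨lt_of_lt_of_le hδ.1 hx.1.le, hx.2⟩).hasDerivWithinAt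
  · exact (intervalIntegrable_iff_integrableOn_Ioc_of_le hδ.2).mpr hint

lemma integrable_y3 (y''' y'''' : ℝ → ℝ)
    (hy3cont : ContinuousOn y''' (Set.Ioc 0 1))
    (hy4d : ∀ x ∈ Set.Ioo (0:ℝ) 1, HasDerivAt y''' (y'''' x) x)
    (haesm : AEStronglyMeasurable y'''' (volume.restrict (Set.Ioc 0 1)))
    (htail : ∀ δ ∈ Set.Ioc (0:ℝ) 1, MeasureTheory.IntegrableOn y'''' (Set.Ioc δ 1))
    (hsy4 : MeasureTheory.IntegrableOn (fun s => s * y'''' s) (Set.Ioc 0 1)) :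
    MeasureTheory.IntegrableOn y''' (Set.Ioc 0 1) := by
  set ν := volume.restrict (Set.Ioc (0:ℝ) 1) with hν
  set m := deriv y''' with hmdef
  have hm : ∀ x ∈ Set.Ioo (0:ℝ) 1, m x = y'''' x := fun x hx => (hy4d x hx).deriv
  have haeIoo : ∀ᵐ x ∂ν, x ∈ Set.Ioo (0:ℝ) 1 := by
    have h3 : ∀ᵐ x : ℝ, x ≠ (1:ℝ) := by
      rw [ae_iff]
      simp only [ne_eq, not_not, setOf_eq_eq_singleton]
      exact measure_singleton 1
    filter_upwards [ae_restrict_mem measurableSet_Ioc, ae_restrict_of_ae h3] with x hx hx1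
    exact ⟨hx.1, lt_of_le_of_ne hx.2 hx1⟩
  set F : ℝ → ℝ → ℝ≥0∞ := fun δ s => (Set.Ioi δ).indicator (fun t => (‖m t‖₊ : ℝ≥0∞)) s with hF
  -- swap
  have hFmeas : AEMeasurable (Function.uncurry F) (ν.prod ν) := by
    have heq : Function.uncurry F =
        Set.indicator {q : ℝ × ℝ | q.1 < q.2} (fun q => (‖m q.2‖₊ : ℝ≥0∞)) := by
      ext p
      by_cases hp : p.1 < p.2 <;>
        simp [Function.uncurry, hF, Set.indicator_apply, hp]
    rw [heq]
    exact (Measurable.indicator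
      ((measurable_deriv y''').nnnorm.coe_nnreal_ennreal.comp measurable_snd)
      (measurableSet_lt measurable_fst measurable_snd)).aemeasurable
  have hswap : ∫⁻ δ, ∫⁻ s, F δ s ∂ν ∂ν = ∫⁻ s, ∫⁻ δ, F δ s ∂ν ∂ν :=
    lintegral_lintegral_swap hFmeas
  -- RHS is finite
  have hRHS : ∫⁻ s, ∫⁻ δ, F δ s ∂ν ∂ν < ⊤ := by
    have h1 : ∫⁻ s, ∫⁻ δ, F δ s ∂ν ∂ν = ∫⁻ s, ‖s * y'''' s‖₊ ∂ν := by
      apply lintegral_congr_ae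
      filter_upwards [haeIoo] with s hs
      have hinner : ∀ δ, F δ s = (Set.Iio s).indicator (fun _ => (‖m s‖₊ : ℝ≥0∞)) δ := by
        intro δ
        by_cases hδ : δ < s <;> simp [hF, Set.indicator_apply, hδ]
      rw [lintegral_congr hinner, lintegral_indicator measurableSet_Iio,
        hν, Measure.restrict_restrict measurableSet_Iio, setLIntegral_const]
      have hset : Set.Iio s ∩ Set.Ioc (0:ℝ) 1 = Set.Ioo 0 s := by
        ext z
        simp only [Set.mem_inter_iff, Set.mem_Iio, Set.mem_Ioc, Set.mem_Ioo]
        constructor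
        · rintro ⟨h1, h2, h3⟩; exact ⟨h2, h1⟩
        · rintro ⟨h1, h2⟩; exact ⟨h2, h1, le_of_lt (lt_of_lt_of_le h2 hs.2.le)⟩
      rw [hset, Real.volume_Ioo, sub_zero, hm s hs]
      rw [show ((‖y'''' s‖₊ : ℝ≥0∞)) = ENNReal.ofReal ‖y'''' s‖ from
        (ofReal_norm _).symm]
      rw [show ((‖s * y'''' s‖₊ : ℝ≥0∞)) = ENNReal.ofReal ‖s * y'''' s‖ from
        (ofReal_norm _).symm]
      rw [← ENNReal.ofReal_mul (norm_nonneg _)]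
      congr 1
      rw [Real.norm_eq_abs, Real.norm_eq_abs, abs_mul, abs_of_pos hs.1]
      ring
    rw [h1]
    exact hsy4.hasFiniteIntegral
  -- pointwise bound on |y''' δ|
  have hbound : ∀ δ ∈ Set.Ioc (0:ℝ) 1,
      (‖y''' δ‖₊ : ℝ≥0∞) ≤ ENNReal.ofReal |y''' 1| + ∫⁻ s, F δ s ∂ν := by
    intro δ hδ
    have hFTC : ∫ s in δ..1, y'''' s = y''' 1 - y''' δ :=
      ftc_Ioc y''' y'''' hy3cont hy4d hδ (htail δ hδ)
    have h2 : |∫ s in δ..1, y'''' s| ≤ ∫ s in Set.Ioc δ 1, ‖y'''' s‖ := by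
      rw [intervalIntegral.integral_of_le hδ.2, ← Real.norm_eq_abs]
      exact norm_integral_le_integral_norm _
    have h1 : |y''' δ| ≤ |y''' 1| + ∫ s in Set.Ioc δ 1, ‖y'''' s‖ := by
      have h0 : y''' δ = y''' 1 - ∫ s in δ..1, y'''' s := by rw [hFTC]; ring
      rw [h0]
      calc |y''' 1 - ∫ s in δ..1, y'''' s| ≤ |y''' 1| + |∫ s in δ..1, y'''' s| := by
            rw [← Real.norm_eq_abs, ← Real.norm_eq_abs (y''' 1),
              ← Real.norm_eq_abs (∫ s in δ..1, y'''' s)]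
            exact norm_sub_le _ _
        _ ≤ |y''' 1| + ∫ s in Set.Ioc δ 1, ‖y'''' s‖ := by linarith
    have hFδ : ∫⁻ s, F δ s ∂ν = ENNReal.ofReal (∫ s in Set.Ioc δ 1, ‖y'''' s‖) := by
      rw [hF]
      simp only []
      rw [lintegral_indicator measurableSet_Ioi, hν,
        Measure.restrict_restrict measurableSet_Ioi]
      have hset2 : Set.Ioi δ ∩ Set.Ioc (0:ℝ) 1 = Set.Ioc δ 1 := by
        ext z
        simp only [Set.mem_inter_iff, Set.mem_Ioi, Set.mem_Ioc]
        constructor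
        · rintro ⟨h1, h2, h3⟩; exact ⟨h1, h3⟩
        · rintro ⟨h1, h2⟩; exact ⟨h1, lt_trans hδ.1 h1, h2⟩
      rw [hset2]
      have hmae : ∀ᵐ x ∂(volume.restrict (Set.Ioc δ 1)), (‖m x‖₊ : ℝ≥0∞) = ‖y'''' x‖₊ := by
        have h3 : ∀ᵐ x : ℝ, x ≠ (1:ℝ) := by
          rw [ae_iff]
          simp only [ne_eq, not_not, setOf_eq_eq_singleton]
          exact measure_singleton 1
        filter_upwards [ae_restrict_mem measurableSet_Ioc, ae_restrict_of_ae h3] with x hx hx1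
        rw [hm x ⟨lt_trans hδ.1 hx.1, lt_of_le_of_ne hx.2 hx1⟩]
      rw [lintegral_congr_ae hmae]
      exact (ofReal_integral_norm_eq_lintegral_enorm (htail δ hδ)).symm
    rw [hFδ, ← ENNReal.ofReal_add (abs_nonneg _) (by positivity)]
    rw [show ((‖y''' δ‖₊ : ℝ≥0∞)) = ENNReal.ofReal |y''' δ| from by
      rw [← Real.norm_eq_abs]; exact (ofReal_norm _).symm]
    exact ENNReal.ofReal_le_ofReal h1
  -- conclude
  refine ⟨hy3cont.aestronglyMeasurable measurableSet_Ioc, ?_⟩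
  rw [MeasureTheory.hasFiniteIntegral_def]
  calc ∫⁻ δ, ‖y''' δ‖₊ ∂ν ≤ ∫⁻ δ, (ENNReal.ofReal |y''' 1| + ∫⁻ s, F δ s ∂ν) ∂ν := by
        apply lintegral_mono_ae
        filter_upwards [ae_restrict_mem measurableSet_Ioc] with δ hδ
        exact hbound δ hδ
    _ = ENNReal.ofReal |y''' 1| * ν Set.univ + ∫⁻ δ, ∫⁻ s, F δ s ∂ν ∂ν := by
        rw [lintegral_add_left measurable_const, lintegral_const]
    _ < ⊤ := by
        apply ENNReal.add_lt_top.mpr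
        constructor
        · apply ENNReal.mul_lt_top ENNReal.ofReal_lt_top
          rw [hν, Measure.restrict_apply_univ, Real.volume_Ioc]
          exact ENNReal.ofReal_lt_top
        · rw [hswap]; exact hRHS

-- tendsto of the primitive at 0 from the right
lemma primitive_tendsto_zero (f : ℝ → ℝ)
    (hint : MeasureTheory.IntegrableOn f (Set.Ioc 0 1)) :
    Filter.Tendsto (fun δ => ∫ t in Set.Ioc 0 δ, f t) (nhdsWithin 0 (Set.Ioc 0 1)) (nhds 0) := by
  have hicc : MeasureTheory.IntegrableOn f (Set.Icc 0 1) := by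
    rwa [integrableOn_Icc_iff_integrableOn_Ioc]
  have hcont := intervalIntegral.continuousOn_primitive (a := 0) (b := 1) (μ := volume) hicc
  have h0 : (0:ℝ) ∈ Set.Icc (0:ℝ) 1 := ⟨le_refl 0, zero_le_one⟩
  have := (hcont 0 h0).tendsto
  have h00 : (∫ t in Set.Ioc (0:ℝ) 0, f t) = 0 := by
    rw [Set.Ioc_self]
    simp
  rw [h00] at this
  exact this.mono_left (nhdsWithin_mono 0 Set.Ioc_subset_Icc_self)

-- splitting the interval integral
lemma integral_split (f : ℝ → ℝ) (hint : MeasureTheory.IntegrableOn f (Set.Ioc 0 1))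
    {δ : ℝ} (hδ : δ ∈ Set.Ioc (0:ℝ) 1) :
    ∫ s in δ..1, f s = (∫ s in Set.Ioc 0 1, f s) - ∫ s in Set.Ioc 0 δ, f s := by
  have h1 : IntervalIntegrable f volume 0 δ :=
    (intervalIntegrable_iff_integrableOn_Ioc_of_le hδ.1.le).mpr
      (hint.mono_set (Set.Ioc_subset_Ioc_right hδ.2))
  have h2 : IntervalIntegrable f volume δ 1 :=
    (intervalIntegrable_iff_integrableOn_Ioc_of_le hδ.2).mpr
      (hint.mono_set (Set.Ioc_subset_Ioc_left hδ.1.le))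
  have hadd := intervalIntegral.integral_add_adjacent_intervals h1 h2
  rw [← intervalIntegral.integral_of_le (zero_le_one), ← hadd,
    intervalIntegral.integral_of_le hδ.1.le]
  ring

/-- If `a` is weakly or strongly degenerate at `0`, `y` is four times differentiable on
`(0,1]` with `∫₀¹ a (y'''')² < ∞` and `y'''` locally absolutely continuous on `(0,1]`,
then `s ↦ s y''''(s)` belongs to `L¹(0,1)` and `lim_{δ→0⁺} δ y'''(δ)` exists and is
finite. -/
theorem delta_third_deriv_limit (a a' : ℝ → ℝ) (K : ℝ) (h : Degenerate a a' K)
    (y y' y'' y''' y'''' : ℝ → ℝ)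
    (hy1 : ∀ x ∈ Set.Ioc (0:ℝ) 1, HasDerivWithinAt y (y' x) (Set.Ioc 0 1) x)
    (hy2 : ∀ x ∈ Set.Ioc (0:ℝ) 1, HasDerivWithinAt y' (y'' x) (Set.Ioc 0 1) x)
    (hy3 : ∀ x ∈ Set.Ioc (0:ℝ) 1, HasDerivWithinAt y'' (y''' x) (Set.Ioc 0 1) x)
    (hy4 : ∀ x ∈ Set.Ioc (0:ℝ) 1, HasDerivWithinAt y''' (y'''' x) (Set.Ioc 0 1) x)
    (hDA : MeasureTheory.IntegrableOn (fun s => a s * y'''' s ^ 2) (Set.Ioc 0 1)) :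
    MeasureTheory.IntegrableOn (fun s => s * y'''' s) (Set.Ioc 0 1) ∧
    ∃ L : ℝ, Filter.Tendsto (fun δ => δ * y''' δ) (nhdsWithin 0 (Set.Ioi 0)) (nhds L) := by
  -- extract facts about the degenerate coefficient
  obtain ⟨hpos, hconta, hderiva, hKsup, hK0, hK2⟩ :
      (∀ x ∈ Set.Ioc (0:ℝ) 1, 0 < a x) ∧ ContinuousOn a (Set.Ioc 0 1) ∧
      (∀ x ∈ Set.Ioo (0:ℝ) 1, HasDerivAt a (a' x) x) ∧
      K = sSup (DegenSet a a') ∧ 0 < K ∧ K < 2 := by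
    rcases h with ⟨hc, hd, -, -, hpos, hsup, hK0, hK1⟩ | ⟨hd, -, -, hpos, hsup, hK1, hK2⟩
    · exact ⟨hpos, hc.mono Set.Ioc_subset_Icc_self,
        fun x hx => (hd x ⟨hx.1, hx.2.le⟩).hasDerivAt (Icc_mem_nhds hx.1 hx.2),
        hsup, hK0, by linarith⟩
    · refine ⟨hpos, ?_, fun x hx => (hd x ⟨hx.1.le, hx.2.le⟩).hasDerivAt
        (Icc_mem_nhds hx.1 hx.2), hsup, by linarith, hK2⟩
      have hcI : ContinuousOn a (Set.Icc 0 1) := fun x hx => (hd x hx).continuousWithinAt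
      exact hcI.mono Set.Ioc_subset_Icc_self
  have ha1 : 0 < a 1 := hpos 1 ⟨one_pos, le_refl 1⟩
  have hb0 := degen_bound a a' K hpos hconta hderiva hKsup hK0 hK2
  set c : ℝ := (Real.sqrt (a 1))⁻¹ with hcdef
  have hc : 0 < c := inv_pos.mpr (Real.sqrt_pos.mpr ha1)
  have hb : ∀ s ∈ Set.Ioc (0:ℝ) 1, s * c⁻¹ ≤ Real.sqrt (a s) := by
    intro s hs
    rw [hcdef, inv_inv]
    exact hb0 s hs
  -- derived facts about y
  have hy3cont : ContinuousOn y''' (Set.Ioc 0 1) := fun x hx => (hy4 x hx).continuousWithinAt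
  have hy2cont : ContinuousOn y'' (Set.Ioc 0 1) := fun x hx => (hy3 x hx).continuousWithinAt
  have hy4d : ∀ x ∈ Set.Ioo (0:ℝ) 1, HasDerivAt y''' (y'''' x) x := fun x hx =>
    (hy4 x ⟨hx.1, hx.2.le⟩).hasDerivAt (Ioc_mem_nhds hx.1 hx.2)
  have hy3d : ∀ x ∈ Set.Ioo (0:ℝ) 1, HasDerivAt y'' (y''' x) x := fun x hx =>
    (hy3 x ⟨hx.1, hx.2.le⟩).hasDerivAt (Ioc_mem_nhds hx.1 hx.2)
  have haesm := aesm_y4 y''' y'''' hy4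
  have hsy4 : MeasureTheory.IntegrableOn (fun s => s * y'''' s) (Set.Ioc 0 1) :=
    integrable_s_y4 a y''' y'''' c hc hb (fun s hs => (hpos s hs).le) hy4 hDA
  have htail : ∀ δ ∈ Set.Ioc (0:ℝ) 1, MeasureTheory.IntegrableOn y'''' (Set.Ioc δ 1) :=
    fun δ hδ => integrable_y4_tail y'''' hδ haesm hsy4
  have hy3int : MeasureTheory.IntegrableOn y''' (Set.Ioc 0 1) :=
    integrable_y3 y''' y'''' hy3cont hy4d haesm htail hsy4
  refine ⟨hsy4, ?_⟩
  -- the auxiliary function H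
  set H : ℝ → ℝ := fun x => x * y''' x - y'' x with hHdef
  have hHd : ∀ x ∈ Set.Ioo (0:ℝ) 1, HasDerivAt H (x * y'''' x) x := by
    intro x hx
    have h1 := ((hasDerivAt_id x).mul (hy4d x hx)).sub (hy3d x hx)
    convert h1 using 1
    · rfl
    · rfl
    · rfl
    simp only [id_eq]
    ring
  have hHcont : ContinuousOn H (Set.Ioc 0 1) :=
    (continuous_id.continuousOn.mul hy3cont).sub hy2cont
  set C : ℝ := H 1 + y'' 1 - (∫ s in Set.Ioc (0:ℝ) 1, s * y'''' s)
      - (∫ s in Set.Ioc (0:ℝ) 1, y''' s) with hCdef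
  have hiden : ∀ δ ∈ Set.Ioc (0:ℝ) 1, δ * y''' δ =
      C + (∫ t in Set.Ioc 0 δ, t * y'''' t) + (∫ t in Set.Ioc 0 δ, y''' t) := by
    intro δ hδ
    have hFTC_H : ∫ s in δ..1, s * y'''' s = H 1 - H δ :=
      ftc_Ioc H (fun s => s * y'''' s) hHcont hHd hδ
        (hsy4.mono_set (Set.Ioc_subset_Ioc_left hδ.1.le))
    have hFTC_y2 : ∫ s in δ..1, y''' s = y'' 1 - y'' δ :=
      ftc_Ioc y'' y''' hy2cont hy3d hδ (hy3int.mono_set (Set.Ioc_subset_Ioc_left hδ.1.le))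
    have hs1 := integral_split (fun s => s * y'''' s) hsy4 hδ
    have hs2 := integral_split y''' hy3int hδ
    rw [hs1] at hFTC_H
    rw [hs2] at hFTC_y2
    have hHδ : H δ = δ * y''' δ - y'' δ := rfl
    rw [hCdef]
    linarith [hFTC_H, hFTC_y2]
  refine ⟨C, ?_⟩
  rw [← nhdsWithin_Ioc_eq_nhdsGT (zero_lt_one (α := ℝ))]
  have hT1 := primitive_tendsto_zero _ hsy4
  have hT2 := primitive_tendsto_zero _ hy3int
  have hT : Filter.Tendsto
      (fun δ => C + (∫ t in Set.Ioc 0 δ, t * y'''' t) + (∫ t in Set.Ioc 0 δ, y''' t))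
      (nhdsWithin 0 (Set.Ioc 0 1)) (nhds (C + 0 + 0)) :=
    (tendsto_const_nhds.add hT1).add hT2
  rw [add_zero, add_zero] at hT
  refine hT.congr' ?_
  filter_upwards [eventually_mem_nhdsWithin] with δ hδ
  exact (hiden δ hδ).symm
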